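/- arXiv:1802.03031 — 3 statements merged into one kernel-verified Lean document; each statement's English description precedes it below -/
import Mathlib

section
/- For each λ ∈ (0,1), the function Δ_{M,λ}(x,y) = inf{t ∈ ℝ : M(x,y,t) > λ} is a metric on X. -/
open Filter Set Topology

structure IsFuzzyMetric {X : Type*} (M : X → X → ℝ → ℝ) : Prop where
  mem_Icc : ∀ x y t, M x y t ∈ Set.Icc (0:ℝ) 1
  km1 : ∀ x y : X, ∀ t : ℝ, t ≤ 0 → M x y t = 0
  km2 : ∀ x y : X, (∀ t : ℝ, 0 < t → M x y t = 1) ↔ x = y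
  km3 : ∀ x y t, M x y t = M y x t
  km4 : ∀ x y z : X, ∀ t s : ℝ, min (M x y t) (M y z s) ≤ M x z (t + s)
  km5_left_cont : ∀ x y : X, x ≠ y → ∀ t : ℝ,
    Filter.Tendsto (M x y) (nhdsWithin t (Set.Iio t)) (nhds (M x y t))
  km5_lim : ∀ x y : X, x ≠ y → Filter.Tendsto (M x y) Filter.atTop (nhds 1)
  sdp : ∀ x y : X, x ≠ y →
    Filter.Tendsto (M x y) (nhdsWithin 0 (Set.Ioi 0)) (nhds 0)

noncomputable def Delta {X : Type*} (M : X → X → ℝ → ℝ) (lam : ℝ) (x y : X) : ℝ :=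
  sInf {t : ℝ | lam < M x y t}

noncomputable def delta {X : Type*} (M : X → X → ℝ → ℝ) (lam : ℝ) (x y : X) : ℝ :=
  sSup {t : ℝ | M x y t < lam}


/-! Δ(x, y) is the infimum of the admissible radii `{t | λ < M x y t}`, an up-closed subset of
`(0, ∞)` (by (KM1) and monotonicity), nonempty by (KM5) since `λ < 1`. By (KM4) the admissible
radii of `(x, z)` contain the Minkowski sum of those of `(x, y)` and `(y, z)`, which gives the
triangle inequality; (SDP) makes all admissible radii of `x ≠ y` exceed some `ε > 0`. -/

open scoped Pointwise

namespace IsFuzzyMetric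

variable {X : Type*} {M : X → X → ℝ → ℝ}

lemma apply_self (hM : IsFuzzyMetric M) (x : X) {t : ℝ} (ht : 0 < t) : M x x t = 1 :=
  (hM.km2 x x).mpr rfl t ht

lemma monotone (hM : IsFuzzyMetric M) (x y : X) : Monotone (M x y) := by
  intro t u htu
  rcases le_or_gt t 0 with ht | ht
  · rw [hM.km1 x y t ht]
    exact (hM.mem_Icc x y u).1
  rcases htu.eq_or_lt with rfl | htu
  · rfl
  calc M x y t = min (M x y t) (M y y (u - t)) := by
        rw [hM.apply_self y (sub_pos.mpr htu), min_eq_left (hM.mem_Icc x y t).2]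
    _ ≤ M x y (t + (u - t)) := hM.km4 x y y t (u - t)
    _ = M x y u := by rw [add_sub_cancel]

lemma setOf_lt_apply_subset_Ioi (hM : IsFuzzyMetric M) {lam : ℝ} (hlam : 0 ≤ lam) (x y : X) :
    {t | lam < M x y t} ⊆ Ioi 0 := by
  intro t ht
  by_contra h
  rw [mem_ofPred_eq, hM.km1 x y t (not_lt.mp h)] at ht
  exact hlam.not_gt ht

lemma setOf_lt_apply_nonempty (hM : IsFuzzyMetric M) {lam : ℝ} (hlam : lam < 1) (x y : X) :
    {t | lam < M x y t}.Nonempty := by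
  by_cases hxy : x = y
  · subst hxy
    exact ⟨1, by rwa [mem_ofPred_eq, hM.apply_self x one_pos]⟩
  · exact ((hM.km5_lim x y hxy).eventually (eventually_gt_nhds hlam)).exists

lemma bddBelow_setOf_lt_apply (hM : IsFuzzyMetric M) {lam : ℝ} (hlam : 0 ≤ lam) (x y : X) :
    BddBelow {t | lam < M x y t} :=
  ⟨0, fun _ ht => (hM.setOf_lt_apply_subset_Ioi hlam x y ht).le⟩

lemma Delta_nonneg (hM : IsFuzzyMetric M) {lam : ℝ} (hlam : 0 ≤ lam) (x y : X) :
    0 ≤ Delta M lam x y :=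
  Real.sInf_nonneg fun _ ht => (hM.setOf_lt_apply_subset_Ioi hlam x y ht).le

lemma lt_apply_of_Delta_lt (hM : IsFuzzyMetric M) {lam : ℝ} (hlam : lam < 1) {x y : X} {u : ℝ}
    (hu : Delta M lam x y < u) : lam < M x y u := by
  obtain ⟨t, ht, htu⟩ := exists_lt_of_csInf_lt (hM.setOf_lt_apply_nonempty hlam x y) hu
  exact ht.trans_le (hM.monotone x y htu.le)

lemma Delta_self (hM : IsFuzzyMetric M) {lam : ℝ} (hlam₀ : 0 ≤ lam) (hlam₁ : lam < 1) (x : X) :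
    Delta M lam x x = 0 := by
  refine le_antisymm (le_of_forall_gt fun ε hε => ?_) (hM.Delta_nonneg hlam₀ x x)
  refine csInf_lt_of_lt (hM.bddBelow_setOf_lt_apply hlam₀ x x) ?_ (half_lt_self hε)
  rwa [mem_ofPred_eq, hM.apply_self x (half_pos hε)]

lemma Delta_pos (hM : IsFuzzyMetric M) {lam : ℝ} (hlam₀ : 0 < lam) (hlam₁ : lam < 1) {x y : X}
    (hxy : x ≠ y) : 0 < Delta M lam x y := by
  obtain ⟨ε, hε, hsmall⟩ := (nhdsGT_basis (0 : ℝ)).eventually_iff.mp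
    ((hM.sdp x y hxy).eventually (eventually_lt_nhds hlam₀))
  by_contra! h
  have hu : Delta M lam x y < ε / 2 := h.trans_lt (half_pos hε)
  exact (hsmall ⟨half_pos hε, half_lt_self hε⟩).not_gt (hM.lt_apply_of_Delta_lt hlam₁ hu)

lemma Delta_eq_zero_iff (hM : IsFuzzyMetric M) {lam : ℝ} (hlam₀ : 0 < lam) (hlam₁ : lam < 1)
    {x y : X} : Delta M lam x y = 0 ↔ x = y :=
  ⟨fun h => by_contra fun hxy => (hM.Delta_pos hlam₀ hlam₁ hxy).ne' h,
    fun h => h ▸ hM.Delta_self hlam₀.le hlam₁ x⟩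

lemma Delta_comm (hM : IsFuzzyMetric M) (lam : ℝ) (x y : X) :
    Delta M lam x y = Delta M lam y x := by
  simp only [Delta, hM.km3 x y]

lemma Delta_triangle (hM : IsFuzzyMetric M) {lam : ℝ} (hlam₀ : 0 ≤ lam) (hlam₁ : lam < 1)
    (x y z : X) : Delta M lam x z ≤ Delta M lam x y + Delta M lam y z := by
  have hne := hM.setOf_lt_apply_nonempty hlam₁
  have hbdd := hM.bddBelow_setOf_lt_apply hlam₀
  have hsum : {t | lam < M x y t} + {t | lam < M y z t} ⊆ {t | lam < M x z t} := by
    rintro _ ⟨a, ha, b, hb, rfl⟩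
    exact (lt_min ha hb).trans_le (hM.km4 x y z a b)
  rw [Delta, Delta, Delta, ← csInf_add (hne x y) (hbdd x y) (hne y z) (hbdd y z)]
  exact csInf_le_csInf (hbdd x z) ((hne x y).add (hne y z)) hsum

end IsFuzzyMetric

theorem Delta_isMetric {X : Type*} (M : X → X → ℝ → ℝ) (hM : IsFuzzyMetric M)
    (lam : ℝ) (hlam : lam ∈ Set.Ioo (0:ℝ) 1) :
    (∀ x y : X, 0 ≤ Delta M lam x y) ∧
    (∀ x y : X, Delta M lam x y = 0 ↔ x = y) ∧
    (∀ x y : X, Delta M lam x y = Delta M lam y x) ∧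
    (∀ x y z : X, Delta M lam x z ≤ Delta M lam x y + Delta M lam y z) :=
  ⟨hM.Delta_nonneg hlam.1.le, fun _ _ => hM.Delta_eq_zero_iff hlam.1 hlam.2,
    hM.Delta_comm lam, hM.Delta_triangle hlam.1.le hlam.2⟩
end

section
/- Let M be a fuzzy metric on X satisfying the finite distance condition. Then for every x,y ∈ X, lim_{λ→1⁻} δ_{M,λ}(x,y) = lim_{λ→1⁻} Δ_{M,λ}(x,y); equivalently, sup_{λ∈(0,1)} δ_{M,λ}(x,y) = sup_{λ∈(0,1)} Δ_{M,λ}(x,y). -/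
open Filter Set Topology

/-!
`M x y` is non-decreasing in `t` (KM2 and KM4), so everything reduces to a monotone
`f : ℝ → ℝ` with `f 0 = 0` and, by (FD), `f b = 1` for some `b`. Both families converge to
`L = inf {t | 1 ≤ f t}`: for `λ` near `1` we have `δ_λ ≤ Δ_λ ≤ L`, because `{1 ≤ f} ⊆ {λ < f}`,
while every `l < L` has `f l < 1`, hence `l ≤ δ_λ` as soon as `λ > f l`.
-/

section MonotoneLevelSets

variable {f : ℝ → ℝ} {a b c : ℝ}

theorem Monotone.bddAbove_setOf_lt (hf : Monotone f) (hb : c ≤ f b) :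
    BddAbove {t | f t < c} :=
  ⟨b, fun _ ht => (hf.reflect_lt (lt_of_lt_of_le ht hb)).le⟩

theorem Monotone.bddBelow_setOf_gt (hf : Monotone f) (ha : f a ≤ c) :
    BddBelow {t | c < f t} :=
  ⟨a, fun _ ht => (hf.reflect_lt (lt_of_le_of_lt ha ht)).le⟩

theorem Monotone.csSup_setOf_lt_le_csInf_setOf_gt (hf : Monotone f) (ha : f a < c)
    (hb : c < f b) : sSup {t | f t < c} ≤ sInf {t | c < f t} :=
  le_csInf ⟨b, hb⟩ fun _ hs =>
    csSup_le ⟨a, ha⟩ fun _ ht => (hf.reflect_lt (ht.trans hs)).le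

theorem Monotone.csInf_setOf_gt_le_csInf_setOf_one_le (hf : Monotone f) (ha : f a ≤ c)
    (hb : 1 ≤ f b) (hc : c < 1) : sInf {t | c < f t} ≤ sInf {t | 1 ≤ f t} :=
  csInf_le_csInf (hf.bddBelow_setOf_gt ha) ⟨b, hb⟩ fun _ ht => hc.trans_le ht

theorem Monotone.tendsto_csSup_setOf_lt (hf : Monotone f) (ha : f a < 1) (hb : 1 ≤ f b) :
    Tendsto (fun c => sSup {t | f t < c}) (𝓝[<] 1) (𝓝 (sInf {t | 1 ≤ f t})) := by
  have hbdd : BddBelow {t | 1 ≤ f t} := ⟨a, fun _ ht => (hf.reflect_lt (ha.trans_le ht)).le⟩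
  refine tendsto_order.2 ⟨fun l hl => ?_, fun u hu => ?_⟩
  · obtain ⟨l', hll', hl'⟩ := exists_between hl
    have hfl' : f l' < 1 := not_le.1 fun h => notMem_of_lt_csInf hl' hbdd h
    filter_upwards [Ioo_mem_nhdsLT hfl'] with c hc
    exact hll'.trans_le (le_csSup (hf.bddAbove_setOf_lt (hc.2.le.trans hb)) hc.1)
  · filter_upwards [Ioo_mem_nhdsLT ha] with c hc
    calc sSup {t | f t < c} ≤ sInf {t | c < f t} :=
          hf.csSup_setOf_lt_le_csInf_setOf_gt hc.1 (hc.2.trans_le hb)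
      _ ≤ sInf {t | 1 ≤ f t} := hf.csInf_setOf_gt_le_csInf_setOf_one_le hc.1.le hb hc.2
      _ < u := hu

theorem Monotone.tendsto_csInf_setOf_gt (hf : Monotone f) (ha : f a < 1) (hb : 1 ≤ f b) :
    Tendsto (fun c => sInf {t | c < f t}) (𝓝[<] 1) (𝓝 (sInf {t | 1 ≤ f t})) := by
  refine tendsto_of_tendsto_of_tendsto_of_le_of_le' (hf.tendsto_csSup_setOf_lt ha hb)
    tendsto_const_nhds ?_ ?_ <;> filter_upwards [Ioo_mem_nhdsLT ha] with c hc
  · exact hf.csSup_setOf_lt_le_csInf_setOf_gt hc.1 (hc.2.trans_le hb)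
  · exact hf.csInf_setOf_gt_le_csInf_setOf_one_le hc.1.le hb hc.2

end MonotoneLevelSets

theorem IsFuzzyMetric.monotone_s9 {X : Type*} {M : X → X → ℝ → ℝ} (hM : IsFuzzyMetric M)
    (x y : X) : Monotone (M x y) := by
  intro s t hst
  rcases hst.eq_or_lt with rfl | hlt
  · exact le_rfl
  have hxx : M x x (t - s) = 1 := (hM.km2 x x).2 rfl _ (sub_pos.2 hlt)
  calc M x y s = min (M x x (t - s)) (M x y s) := by
        rw [hxx, min_eq_right (hM.mem_Icc x y s).2]
    _ ≤ M x y (t - s + s) := hM.km4 x x y _ _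
    _ = M x y t := by rw [sub_add_cancel]

theorem limits_eq {X : Type*} (M : X → X → ℝ → ℝ) (hM : IsFuzzyMetric M)
    (hFD : ∀ x y : X, ∃ t : ℝ, M x y t = 1) :
    ∀ x y : X, ∃ L : ℝ,
      Filter.Tendsto (fun lam => delta M lam x y)
        (nhdsWithin (1:ℝ) (Set.Iio 1)) (nhds L) ∧
      Filter.Tendsto (fun lam => Delta M lam x y)
        (nhdsWithin (1:ℝ) (Set.Iio 1)) (nhds L) := by
  intro x y
  obtain ⟨b, hb⟩ := hFD x y
  have hf := hM.monotone_s9 x y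
  have ha : M x y 0 < 1 := by rw [hM.km1 x y 0 le_rfl]; exact one_pos
  exact ⟨_, hf.tendsto_csSup_setOf_lt ha hb.ge, hf.tendsto_csInf_setOf_gt ha hb.ge⟩
end

section
/- Define M : ℝ × ℝ × ℝ → [0,1] by M(x,y,t) = 0 for t ≤ 0; M(x,y,t) = 1 if x = y and t > 0; M(x,y,t) = t/(t+|x−y|) if x ≠ y and 0 < t ≤ 2; M(x,y,t) = 1 if x ≠ y and t > 2. Then M is a fuzzy metric on ℝ satisfying the finite distance condition, and the induced metric satisfies d_M(x,y) = 2 for all x ≠ y. -/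
open Filter Set Topology

noncomputable def dM {X : Type*} (M : X → X → ℝ → ℝ) (x y : X) : ℝ :=
  sSup ((fun lam => Delta M lam x y) '' Set.Ioo (0:ℝ) 1)

noncomputable def Mex (x y t : ℝ) : ℝ :=
  if t ≤ 0 then 0
  else if x = y then 1
  else if t ≤ 2 then t / (t + |x - y|)
  else 1

/-!
For `t ∈ (0, 2]`, `Mex x y t = t / (t + |x - y|)`, also when `x = y`. The triangle inequality
(KM4) then follows from the mediant bound
`min (t / (t + a)) (s / (s + b)) ≤ (t + s) / (t + s + (a + b))` and `|x - z| ≤ |x - y| + |y - z|`;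
beyond `t = 2` everything equals `1`. For `x ≠ y`, `Mex x y` jumps at `t = 2` from
`2 / (2 + |x - y|)` to `1`, so every level `λ < 1` is exceeded on `(2, ∞)`, and the level
`2 / (2 + |x - y|)` is exceeded exactly there: the supremum defining `dM` is attained and equals `2`.
-/

lemma div_add_le_div_add_of_le {s t c : ℝ} (hs : 0 < s) (hc : 0 ≤ c) (hst : s ≤ t) :
    s / (s + c) ≤ t / (t + c) := by
  rw [div_le_div_iff₀ (by linarith) (by linarith)]
  nlinarith

lemma min_div_add_le_add_div_add_add {t s a b : ℝ} (ht : 0 < t) (hs : 0 < s)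
    (ha : 0 ≤ a) (hb : 0 ≤ b) :
    min (t / (t + a)) (s / (s + b)) ≤ (t + s) / (t + s + (a + b)) := by
  rcases le_total (t * b) (s * a) with h | h
  · refine (min_le_left _ _).trans ?_
    rw [div_le_div_iff₀ (by linarith) (by linarith)]; nlinarith
  · refine (min_le_right _ _).trans ?_
    rw [div_le_div_iff₀ (by linarith) (by linarith)]; nlinarith

namespace Mex

variable {x y t : ℝ}

lemma of_nonpos (ht : t ≤ 0) : Mex x y t = 0 := if_pos ht

lemma of_two_lt (ht : 2 < t) : Mex x y t = 1 := by
  have ht0 : ¬ t ≤ 0 := by linarith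
  by_cases h : x = y <;> simp [Mex, ht0, h, not_le.2 ht]

lemma of_eq (h : x = y) (ht : 0 < t) : Mex x y t = 1 := by
  simp [Mex, not_le.2 ht, h]

/-- This includes the case `x = y`, where `t / (t + 0) = 1`. -/
lemma of_pos_of_le_two (ht : 0 < t) (ht2 : t ≤ 2) : Mex x y t = t / (t + |x - y|) := by
  by_cases h : x = y
  · simp [Mex, not_le.2 ht, h, ht.ne']
  · simp [Mex, not_le.2 ht, h, ht2]

lemma mem_Icc (x y t : ℝ) : Mex x y t ∈ Icc (0 : ℝ) 1 := by
  rcases le_or_gt t 0 with ht | ht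
  · simp [of_nonpos ht]
  rcases le_or_gt t 2 with ht2 | ht2
  · rw [of_pos_of_le_two ht ht2]
    exact ⟨by positivity, div_le_one_of_le₀ (by linarith [abs_nonneg (x - y)]) (by positivity)⟩
  · simp [of_two_lt ht2]

lemma comm (x y t : ℝ) : Mex x y t = Mex y x t := by
  simp only [Mex, eq_comm (a := x), abs_sub_comm x y]

lemma forall_pos_eq_one_iff : (∀ t, 0 < t → Mex x y t = 1) ↔ x = y := by
  refine ⟨fun h => ?_, fun h t ht => of_eq h ht⟩
  have h1 := h 1 one_pos
  rw [of_pos_of_le_two one_pos one_le_two, div_eq_one_iff_eq (by positivity)] at h1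
  simpa [sub_eq_zero] using h1

lemma min_le_add (x y z t s : ℝ) : min (Mex x y t) (Mex y z s) ≤ Mex x z (t + s) := by
  rcases le_or_gt t 0 with ht | ht
  · exact (min_le_left _ _).trans ((of_nonpos ht).trans_le (mem_Icc x z _).1)
  rcases le_or_gt s 0 with hs | hs
  · exact (min_le_right _ _).trans ((of_nonpos hs).trans_le (mem_Icc x z _).1)
  rcases le_or_gt (t + s) 2 with hts | hts
  · have htri : |x - z| ≤ |x - y| + |y - z| := abs_sub_le x y z
    rw [of_pos_of_le_two ht (by linarith), of_pos_of_le_two hs (by linarith),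
      of_pos_of_le_two (by linarith) hts]
    calc min (t / (t + |x - y|)) (s / (s + |y - z|))
        ≤ (t + s) / (t + s + (|x - y| + |y - z|)) :=
          min_div_add_le_add_div_add_add ht hs (abs_nonneg _) (abs_nonneg _)
      _ ≤ (t + s) / (t + s + |x - z|) :=
          div_le_div_of_nonneg_left (by linarith) (by positivity) (by linarith)
  · rw [of_two_lt hts]
    exact (min_le_left _ _).trans (mem_Icc x y t).2

lemma eqOn_Iic :
    EqOn (Mex x y) (fun u => max u 0 / (max u 0 + |x - y|)) (Iic 2) := by
  intro u hu
  rcases le_or_gt u 0 with h0 | h0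
  · simp [of_nonpos h0, max_eq_right h0]
  · rw [of_pos_of_le_two h0 hu]
    simp only [max_eq_left h0.le]

lemma continuousOn_Iic (h : x ≠ y) : ContinuousOn (Mex x y) (Iic 2) := by
  have ha : 0 < |x - y| := abs_pos.2 (sub_ne_zero.2 h)
  refine ContinuousOn.congr ?_ eqOn_Iic
  exact (Continuous.div (by fun_prop) (by fun_prop)
    fun u => by positivity).continuousOn

lemma continuousAt_of_two_lt (ht : 2 < t) : ContinuousAt (Mex x y) t :=
  continuousAt_const.congr <|
    (eventually_gt_nhds ht).mono fun _ hu => (of_two_lt hu).symm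

lemma le_of_le_two (ht : t ≤ 2) : Mex x y t ≤ 2 / (2 + |x - y|) := by
  rcases le_or_gt t 0 with h0 | h0
  · rw [of_nonpos h0]; positivity
  · rw [of_pos_of_le_two h0 ht]
    exact div_add_le_div_add_of_le h0 (abs_nonneg _) ht

end Mex

lemma Delta_Mex_le_two {lam : ℝ} (hlam : lam ∈ Ioo (0 : ℝ) 1) (x y : ℝ) :
    Delta Mex lam x y ≤ 2 := by
  have hbdd : BddBelow {t : ℝ | lam < Mex x y t} := by
    refine ⟨0, fun t ht => not_lt.1 fun hneg => ?_⟩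
    rw [mem_ofPred_eq, Mex.of_nonpos hneg.le] at ht
    exact lt_asymm hlam.1 ht
  calc Delta Mex lam x y ≤ sInf (Ioi (2 : ℝ)) :=
        csInf_le_csInf hbdd nonempty_Ioi fun t ht => by
          rw [mem_ofPred_eq, Mex.of_two_lt ht]; exact hlam.2
    _ = 2 := csInf_Ioi

lemma Delta_Mex_eq_two {x y : ℝ} (h : x ≠ y) : Delta Mex (2 / (2 + |x - y|)) x y = 2 := by
  have ha : 0 < |x - y| := abs_pos.2 (sub_ne_zero.2 h)
  have hlt : 2 / (2 + |x - y|) < 1 := (div_lt_one (by positivity)).2 (by linarith)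
  have hset : {t : ℝ | 2 / (2 + |x - y|) < Mex x y t} = Ioi 2 := by
    ext t
    refine ⟨fun ht => not_le.1 fun ht2 => (Mex.le_of_le_two ht2).not_gt ht, fun ht => ?_⟩
    rw [mem_ofPred_eq, Mex.of_two_lt ht]
    exact hlt
  rw [Delta, hset, csInf_Ioi]

lemma dM_Mex {x y : ℝ} (h : x ≠ y) : dM Mex x y = 2 := by
  have ha : 0 < |x - y| := abs_pos.2 (sub_ne_zero.2 h)
  refine IsGreatest.csSup_eq ⟨⟨2 / (2 + |x - y|), ⟨by positivity, ?_⟩, Delta_Mex_eq_two h⟩, ?_⟩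
  · exact (div_lt_one (by positivity)).2 (by linarith)
  · rintro _ ⟨lam, hlam, rfl⟩
    exact Delta_Mex_le_two hlam x y

theorem example_fuzzyMetric :
    IsFuzzyMetric Mex ∧ (∀ x y : ℝ, ∃ t : ℝ, Mex x y t = 1) ∧
    (∀ x y : ℝ, x ≠ y → dM Mex x y = 2) := by
  refine ⟨⟨Mex.mem_Icc, fun _ _ _ => Mex.of_nonpos, fun _ _ => Mex.forall_pos_eq_one_iff,
    Mex.comm, Mex.min_le_add, ?_, ?_, ?_⟩, fun _ _ => ⟨3, Mex.of_two_lt (by norm_num)⟩,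
    fun _ _ => dM_Mex⟩
  · intro x y h t
    rcases le_or_gt t 2 with ht | ht
    · exact (Mex.continuousOn_Iic h t ht).mono (Iio_subset_Iic ht)
    · exact (Mex.continuousAt_of_two_lt ht).continuousWithinAt
  · intro x y _
    exact tendsto_const_nhds.congr' <|
      (eventually_gt_atTop 2).mono fun _ hu => (Mex.of_two_lt hu).symm
  · intro x y h
    have h0 := (Mex.continuousOn_Iic h).continuousAt (Iic_mem_nhds two_pos)
    simpa [Mex.of_nonpos le_rfl] using h0.tendsto.mono_left nhdsWithin_le_nhds
end
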